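/- arXiv:0804.0645 — 2 statements merged into one kernel-verified Lean document; each statement's English description precedes it below -/
import Mathlib

section
/- For every odd positive integer k ≥ 3 and integer a with 0 < a < k, the sum over j from 1 to k-1 of sin(2πaj/k)/sin(2πj/k) equals k − a if a is odd and −a if a is even. -/
/-!
Write `θ_j = 2πj/k` and `S(a) = ∑_{j=1}^{k-1} sin (a θ_j) / sin θ_j`; the denominators vanish
only when `k ∣ 2j`, which the oddness of `k` rules out. Since
`sin ((a+2)θ) - sin (aθ) = 2 sin θ cos ((a+1)θ)`, we get `S(a+2) = S(a) + 2 ∑_j cos ((a+1) θ_j)`,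
and the cosine sum is `-1` whenever `k ∤ a+1`: adding the term `j = 0` gives the real part of a
full geometric sum of a nontrivial `k`-th root of unity. Hence `S` drops by `2` at each step from
`S(0) = 0` and `S(1) = k - 1`.
-/

open Finset Real

lemma sin_two_pi_mul_div_ne_zero {k j : ℕ} (hk : Odd k) (hj : ¬ k ∣ j) :
    sin (2 * π * j / k) ≠ 0 := by
  rw [Ne, sin_eq_zero_iff]
  rintro ⟨n, hn⟩
  have hk0 : (k : ℝ) ≠ 0 := by exact_mod_cast hk.pos.ne'
  field_simp at hn
  have h2j : (k : ℤ) ∣ 2 * j := ⟨n, by exact_mod_cast (by linarith : (2 * j : ℝ) = k * n)⟩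
  exact hj ((Nat.coprime_two_right.mpr hk).dvd_of_dvd_mul_left (by exact_mod_cast h2j))

lemma sum_range_cos_two_pi_mul_div {k n : ℕ} (hn : ¬ k ∣ n) :
    ∑ j ∈ range k, cos (2 * π * n * j / k) = 0 := by
  rcases eq_or_ne k 0 with rfl | hk
  · simp
  have hω := Complex.isPrimitiveRoot_exp k hk
  set ζ := Complex.exp (2 * π * Complex.I / k) ^ n
  have hζk : ζ ^ k = 1 := by rw [pow_right_comm, hω.pow_eq_one, one_pow]
  have hζ1 : ζ ≠ 1 := by rwa [Ne, hω.pow_eq_one_iff_dvd]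
  calc ∑ j ∈ range k, cos (2 * π * n * j / k) = (∑ j ∈ range k, ζ ^ j).re := by
        rw [Complex.re_sum]
        refine sum_congr rfl fun j _ => ?_
        rw [← pow_mul, ← Complex.exp_nat_mul, ← Complex.exp_ofReal_mul_I_re]
        congr 2
        push_cast
        ring
    _ = 0 := by rw [geom_sum_eq hζ1, hζk, sub_self, zero_div, Complex.zero_re]

lemma sum_Icc_cos_two_pi_mul_div {k n : ℕ} (hk : k ≠ 0) (hn : ¬ k ∣ n) :
    ∑ j ∈ Icc 1 (k - 1), cos (2 * π * n * j / k) = -1 := by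
  have hsum := sum_range_cos_two_pi_mul_div hn
  rw [range_eq_Ico, sum_eq_sum_Ico_succ_bot (Nat.pos_of_ne_zero hk)] at hsum
  have hIcc : Icc 1 (k - 1) = Ico 1 k := by ext; simp only [mem_Icc, mem_Ico]; omega
  rw [hIcc]
  simpa [add_eq_zero_iff_eq_neg'] using hsum

lemma sin_add_two_mul_div_sin (a : ℝ) {θ : ℝ} (hθ : sin θ ≠ 0) :
    sin ((a + 2) * θ) / sin θ = sin (a * θ) / sin θ + 2 * cos ((a + 1) * θ) := by
  have h := sin_sub_sin ((a + 2) * θ) (a * θ)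
  rw [show ((a + 2) * θ - a * θ) / 2 = θ by ring,
    show ((a + 2) * θ + a * θ) / 2 = (a + 1) * θ by ring] at h
  rw [show sin ((a + 2) * θ) = sin (a * θ) + 2 * cos ((a + 1) * θ) * sin θ by linarith,
    add_div, mul_div_cancel_right₀ _ hθ]

noncomputable def sinRatioSum (k a : ℕ) : ℝ :=
  ∑ j ∈ Icc 1 (k - 1), sin (2 * π * a * j / k) / sin (2 * π * j / k)

lemma sinRatioSum_zero (k : ℕ) : sinRatioSum k 0 = 0 := by
  simp [sinRatioSum]

lemma sinRatioSum_one {k : ℕ} (hk : Odd k) : sinRatioSum k 1 = k - 1 := by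
  have hterm : ∀ j ∈ Icc 1 (k - 1), sin (2 * π * (1 : ℕ) * j / k) / sin (2 * π * j / k) = 1 :=
    fun j hj ↦ by
      rw [mem_Icc] at hj
      rw [Nat.cast_one, mul_one, div_self (sin_two_pi_mul_div_ne_zero hk
        (Nat.not_dvd_of_pos_of_lt hj.1 (by omega)))]
  rw [sinRatioSum, sum_congr rfl hterm, sum_const, Nat.card_Icc, nsmul_one,
    Nat.add_sub_cancel, Nat.cast_sub hk.pos, Nat.cast_one]

lemma sinRatioSum_add_two {k a : ℕ} (hk : Odd k) (ha : ¬ k ∣ a + 1) :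
    sinRatioSum k (a + 2) = sinRatioSum k a - 2 := by
  have hstep : ∀ j ∈ Icc 1 (k - 1),
      sin (2 * π * (a + 2 : ℕ) * j / k) / sin (2 * π * j / k) =
        sin (2 * π * a * j / k) / sin (2 * π * j / k) + 2 * cos (2 * π * (a + 1 : ℕ) * j / k) :=
    fun j hj ↦ by
      rw [mem_Icc] at hj
      have hmul (b : ℝ) : 2 * π * b * j / k = b * (2 * π * j / k) := by ring
      push_cast
      simp only [hmul]
      exact sin_add_two_mul_div_sin a
        (sin_two_pi_mul_div_ne_zero hk (Nat.not_dvd_of_pos_of_lt hj.1 (by omega)))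
  rw [sinRatioSum, sum_congr rfl hstep, sum_add_distrib, ← mul_sum,
    sum_Icc_cos_two_pi_mul_div hk.pos.ne' ha, sinRatioSum]
  ring

lemma sinRatioSum_eq {k a : ℕ} (hk : Odd k) (hak : a < k) :
    sinRatioSum k a = if Odd a then (k : ℝ) - a else -(a : ℝ) := by
  induction a using Nat.twoStepInduction with
  | zero => simp [sinRatioSum_zero]
  | one => simp [sinRatioSum_one hk]
  | more a ih _ =>
    rw [sinRatioSum_add_two hk (Nat.not_dvd_of_pos_of_lt a.succ_pos (by omega)), ih (by omega)]
    simp only [Nat.odd_add, even_two, iff_true]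
    split_ifs <;> push_cast <;> ring

theorem sum_sin_csc_general (a k : ℕ) (hk : Odd k) (hak : a < k) :
    ∑ j ∈ Finset.Icc 1 (k - 1), Real.sin (2 * π * a * j / k) / Real.sin (2 * π * j / k) =
    if Odd a then (k : ℝ) - a else -(a : ℝ) :=
  sinRatioSum_eq hk hak

theorem sum_sin_csc (a k : ℕ) (hk : Odd k) (hk3 : 3 ≤ k) (ha : 0 < a) (hak : a < k) :
    ∑ j ∈ Finset.Icc 1 (k - 1), Real.sin (2 * π * a * j / k) / Real.sin (2 * π * j / k) =
    if Odd a then (k : ℝ) - a else -(a : ℝ) :=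
  sum_sin_csc_general a k hk hak
end

section
/- For every odd positive integer k ≥ 3, the sum over j from 1 to k-1 of cot(πj/k)·csc(2πj/k) equals (k² − 1)/6. -/
/-!
Since `sin 2x = 2 sin x cos x`, each summand equals `1 / (2 sin² (πj/k))` as soon as
`cos (πj/k) ≠ 0`, which holds because `k` is odd. The statement thus reduces to the classical
`∑ csc² (πj/k) = (k² - 1) / 3`. With `ζ = e^{2πi/k}` and `w_j = 1 / (ζ^j - 1)` one has
`csc² (πj/k) = -4 ζ^j / (ζ^j - 1)² = -4 (w_j + w_j²)`, and the sums of `w_j` and `w_j²` over the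
nontrivial `k`-th roots of unity come from the closed forms of `∑_{n<k} n ζ^{jn}` and
`∑_{n<k} n² ζ^{jn}` (linear and quadratic in `w_j`), summed over `j` by orthogonality:
`∑_{j=1}^{k-1} ζ^{jn} = -1` for `0 < n < k`.
-/

open Finset Real

section PowerSums

variable {R : Type*} [CommRing R]

theorem sum_range_natCast_mul_two (k : ℕ) :
    (∑ n ∈ range k, (n : R)) * 2 = k * (k - 1) := by
  induction k with
  | zero => simp
  | succ m ih => rw [sum_range_succ, add_mul, ih]; push_cast; ring

theorem sum_range_natCast_sq_mul_six (k : ℕ) :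
    (∑ n ∈ range k, (n : R) ^ 2) * 6 = k * (k - 1) * (2 * k - 1) := by
  induction k with
  | zero => simp
  | succ m ih => rw [sum_range_succ, add_mul, ih]; push_cast; ring

theorem sub_one_mul_sum_range_mul_pow (z : R) (k : ℕ) :
    (z - 1) * ∑ n ∈ range k, (n : R) * z ^ n = k * z ^ k - z * ∑ n ∈ range k, z ^ n := by
  induction k with
  | zero => simp
  | succ m ih =>
    simp only [sum_range_succ, mul_add, ih]
    push_cast
    ring

theorem sub_one_mul_sum_range_sq_mul_pow (z : R) (k : ℕ) :
    (z - 1) * ∑ n ∈ range k, (n : R) ^ 2 * z ^ n =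
      k ^ 2 * z ^ k - 2 * z * ∑ n ∈ range k, (n : R) * z ^ n - z * ∑ n ∈ range k, z ^ n := by
  induction k with
  | zero => simp
  | succ m ih =>
    simp only [sum_range_succ, mul_add, ih]
    push_cast
    ring

end PowerSums

section RootsOfUnity

variable {K : Type*} [Field K] {k : ℕ}

theorem geom_sum_eq_zero_of_pow_eq_one {z : K} (hz : z ^ k = 1) (h1 : z ≠ 1) :
    ∑ n ∈ range k, z ^ n = 0 := by
  rw [geom_sum_eq h1, hz, sub_self, zero_div]

theorem sum_range_mul_pow_of_pow_eq_one {z : K} (hz : z ^ k = 1) (h1 : z ≠ 1) :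
    ∑ n ∈ range k, (n : K) * z ^ n = k * (z - 1)⁻¹ := by
  have h := sub_one_mul_sum_range_mul_pow z k
  rw [hz, geom_sum_eq_zero_of_pow_eq_one hz h1] at h
  rw [eq_mul_inv_iff_mul_eq₀ (sub_ne_zero.mpr h1)]
  linear_combination h

theorem sum_range_sq_mul_pow_of_pow_eq_one {z : K} (hz : z ^ k = 1) (h1 : z ≠ 1) :
    ∑ n ∈ range k, (n : K) ^ 2 * z ^ n = (k ^ 2 - 2 * k) * (z - 1)⁻¹ - 2 * k * (z - 1)⁻¹ ^ 2 := by
  have hz1 : z - 1 ≠ 0 := sub_ne_zero.mpr h1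
  have h := sub_one_mul_sum_range_sq_mul_pow z k
  rw [hz, geom_sum_eq_zero_of_pow_eq_one hz h1, sum_range_mul_pow_of_pow_eq_one hz h1] at h
  field_simp at h ⊢
  linear_combination h

theorem sum_Icc_pow_of_pow_eq_one (hk : 0 < k) {z : K} (hz : z ^ k = 1) (h1 : z ≠ 1) :
    ∑ j ∈ Icc 1 (k - 1), z ^ j = -1 := by
  have h := geom_sum_eq_zero_of_pow_eq_one hz h1
  rw [range_eq_Ico, sum_eq_sum_Ico_succ_bot hk, pow_zero,
    ← Icc_sub_one_right_eq_Ico_of_not_isMin (by simpa using hk.ne')] at h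
  linear_combination h

end RootsOfUnity

namespace IsPrimitiveRoot

variable {K : Type*} [Field K] {k : ℕ} {ζ : K}

theorem pow_pow_eq_one (h : IsPrimitiveRoot ζ k) (j : ℕ) : (ζ ^ j) ^ k = 1 := by
  rw [pow_right_comm, h.pow_eq_one, one_pow]

theorem pow_ne_one_of_mem_Icc (h : IsPrimitiveRoot ζ k) {j : ℕ} (hj : j ∈ Icc 1 (k - 1)) :
    ζ ^ j ≠ 1 := by
  rw [mem_Icc] at hj
  exact h.pow_ne_one_of_pos_of_lt (by omega) (by omega)

theorem sum_Icc_sum_range_mul_pow (h : IsPrimitiveRoot ζ k) (f : ℕ → K) (hf : f 0 = 0) :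
    ∑ j ∈ Icc 1 (k - 1), ∑ n ∈ range k, f n * (ζ ^ j) ^ n = -∑ n ∈ range k, f n := by
  rw [sum_comm, ← sum_neg_distrib]
  refine sum_congr rfl fun n hn => ?_
  rcases Nat.eq_zero_or_pos n with rfl | hn0
  · simp [hf]
  · have hnk : n < k := mem_range.mp hn
    simp only [pow_right_comm ζ _ n, ← mul_sum]
    rw [sum_Icc_pow_of_pow_eq_one (hn0.trans hnk) (h.pow_pow_eq_one n)
      (h.pow_ne_one_of_pos_of_lt hn0.ne' hnk), mul_neg_one]

variable [CharZero K]

theorem sum_Icc_inv_pow_sub_one (h : IsPrimitiveRoot ζ k) (hk : 0 < k) :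
    ∑ j ∈ Icc 1 (k - 1), (ζ ^ j - 1)⁻¹ = -(k - 1) / 2 := by
  have key := h.sum_Icc_sum_range_mul_pow (fun n => (n : K)) Nat.cast_zero
  rw [sum_congr rfl fun j hj =>
    sum_range_mul_pow_of_pow_eq_one (h.pow_pow_eq_one j) (h.pow_ne_one_of_mem_Icc hj),
    ← mul_sum] at key
  apply mul_left_cancel₀ (Nat.cast_ne_zero.mpr hk.ne' : (k : K) ≠ 0)
  linear_combination key - sum_range_natCast_mul_two (R := K) k / 2

theorem sum_Icc_inv_pow_sub_one_sq (h : IsPrimitiveRoot ζ k) (hk : 0 < k) :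
    ∑ j ∈ Icc 1 (k - 1), (ζ ^ j - 1)⁻¹ ^ 2 = (k - 1) * (5 - k) / 12 := by
  have key := h.sum_Icc_sum_range_mul_pow (fun n => (n : K) ^ 2) (by simp)
  rw [sum_congr rfl fun j hj =>
    sum_range_sq_mul_pow_of_pow_eq_one (h.pow_pow_eq_one j) (h.pow_ne_one_of_mem_Icc hj),
    sum_sub_distrib, ← mul_sum, ← mul_sum, h.sum_Icc_inv_pow_sub_one hk] at key
  apply mul_left_cancel₀ (by simpa using hk.ne' : (2 * k : K) ≠ 0)
  linear_combination -key + sum_range_natCast_sq_mul_six (R := K) k / 6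

end IsPrimitiveRoot

namespace Complex

theorem exp_two_mul_mul_I_sub_one_sq (x : ℂ) :
    (exp (2 * x * I) - 1) ^ 2 = -4 * sin x ^ 2 * exp (2 * x * I) := by
  have he : exp (x * I) * exp (-x * I) = 1 := by rw [← exp_add]; simp
  have h2 : exp (2 * x * I) = exp (x * I) ^ 2 := by
    rw [← exp_nat_mul]
    push_cast
    ring_nf
  rw [sin, h2]
  linear_combination (2 * exp (x * I) ^ 2 - 1 - exp (x * I) * exp (-x * I)) * he
    + (exp (-x * I) - exp (x * I)) ^ 2 * exp (x * I) ^ 2 * I_sq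

theorem inv_sin_sq_eq (x : ℂ) (hx : sin x ≠ 0) :
    (sin x ^ 2)⁻¹ = -4 * ((exp (2 * x * I) - 1)⁻¹ + (exp (2 * x * I) - 1)⁻¹ ^ 2) := by
  have hsq := exp_two_mul_mul_I_sub_one_sq x
  have hz1 : exp (2 * x * I) - 1 ≠ 0 := by
    intro h0
    rw [h0, zero_pow two_ne_zero] at hsq
    simp [hx, exp_ne_zero] at hsq
  field_simp
  linear_combination hsq

end Complex

theorem Real.sin_pi_mul_div_pos {j k : ℕ} (hj : 0 < j) (hjk : j < k) : 0 < sin (π * j / k) := by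
  have hk : (0 : ℝ) < k := by exact_mod_cast hj.trans hjk
  apply sin_pos_of_pos_of_lt_pi (by positivity)
  rw [div_lt_iff₀ hk, mul_lt_mul_iff_right₀ pi_pos]
  exact_mod_cast hjk

theorem Real.cos_pi_mul_div_ne_zero_of_odd {k : ℕ} (hk : Odd k) (j : ℕ) : cos (π * j / k) ≠ 0 := by
  rw [Ne, cos_eq_zero_iff]
  rintro ⟨m, hm⟩
  have hk0 : (k : ℝ) ≠ 0 := by exact_mod_cast hk.pos.ne'
  have hR : ((2 * j : ℤ) : ℝ) = ((2 * m + 1) * k : ℤ) := by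
    push_cast
    field_simp at hm
    linear_combination hm
  have hZ : (2 * j : ℤ) = (2 * m + 1) * k := by exact_mod_cast hR
  have hodd : Odd ((2 * m + 1) * (k : ℤ)) := (odd_two_mul_add_one m).mul (by exact_mod_cast hk)
  rw [← hZ] at hodd
  exact Int.not_even_iff_odd.mpr hodd (even_two_mul _)

theorem Real.cot_mul_one_div_sin_two_mul {x : ℝ} (hx : cos x ≠ 0) :
    cos x / sin x * (1 / sin (2 * x)) = (sin x ^ 2)⁻¹ / 2 := by
  rw [sin_two_mul]
  by_cases hs : sin x = 0
  · simp [hs]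
  · field_simp

theorem Real.sum_inv_sin_sq_pi_mul_div {k : ℕ} (hk : 0 < k) :
    ∑ j ∈ Icc 1 (k - 1), (sin (π * j / k) ^ 2)⁻¹ = ((k : ℝ) ^ 2 - 1) / 3 := by
  have hζ := Complex.isPrimitiveRoot_exp k hk.ne'
  set ζ := Complex.exp (2 * π * Complex.I / k)
  have hterm : ∀ j ∈ Icc 1 (k - 1), (Complex.sin (π * j / k) ^ 2)⁻¹ =
      -4 * ((ζ ^ j - 1)⁻¹ + (ζ ^ j - 1)⁻¹ ^ 2) := fun j hj => by
    have hsin : sin (π * j / k) ≠ 0 :=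
      (sin_pi_mul_div_pos (mem_Icc.mp hj).1 (by have := (mem_Icc.mp hj).2; omega)).ne'
    have hζj : ζ ^ j = Complex.exp (2 * (π * j / k) * Complex.I) := by
      rw [← Complex.exp_nat_mul]
      ring_nf
    rw [hζj, Complex.inv_sin_sq_eq]
    exact_mod_cast hsin
  apply Complex.ofReal_injective
  push_cast
  rw [sum_congr rfl hterm, ← mul_sum, sum_add_distrib, hζ.sum_Icc_inv_pow_sub_one hk,
    hζ.sum_Icc_inv_pow_sub_one_sq hk]
  ring

theorem sum_cot_csc_general (k : ℕ) (hk : Odd k) :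
    ∑ j ∈ Finset.Icc 1 (k - 1),
      (Real.cos (π * j / k) / Real.sin (π * j / k)) * (1 / Real.sin (2 * π * j / k)) =
    ((k : ℝ) ^ 2 - 1) / 6 := by
  have hterm : ∀ j ∈ Icc 1 (k - 1), cos (π * j / k) / sin (π * j / k) * (1 / sin (2 * π * j / k))
      = (sin (π * j / k) ^ 2)⁻¹ / 2 := fun j _ => by
    rw [mul_assoc 2, mul_div_assoc 2]
    exact cot_mul_one_div_sin_two_mul (cos_pi_mul_div_ne_zero_of_odd hk j)
  rw [sum_congr rfl hterm, ← sum_div, sum_inv_sin_sq_pi_mul_div hk.pos]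
  ring

theorem sum_cot_csc (k : ℕ) (hk : Odd k) (hk3 : 3 ≤ k) :
    ∑ j ∈ Finset.Icc 1 (k - 1),
      (Real.cos (π * j / k) / Real.sin (π * j / k)) * (1 / Real.sin (2 * π * j / k)) =
    ((k : ℝ) ^ 2 - 1) / 6 :=
  sum_cot_csc_general k hk
end
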